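/- arXiv:2511.10813 — 6 statements merged into one kernel-verified Lean document; each statement's English description precedes it below -/
import Mathlib

section
/- (Tomato Cage Theorem) Let M be an m×1 integer matrix (a single column vector) such that M ≠ e_i and M ≠ −e_i for every standard basis vector e_i of ℤ^m. Then the chromatic number of the standardized abelian Cayley graph of M equals 2 if the sum s of the entries of M is even, and equals 3 if s is odd. -/
/-- The subgroup of `ι → ℤ` generated by the columns of `M`. -/
def colSubgroup {ι κ : Type*} (M : Matrix ι κ ℤ) : AddSubgroup (ι → ℤ) :=
  AddSubgroup.closure (Set.range fun j => fun i => M i j)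

/-- The standardized abelian Cayley graph of an integer matrix `M`. -/
def SACG {ι κ : Type*} [DecidableEq ι] (M : Matrix ι κ ℤ) :
    SimpleGraph ((ι → ℤ) ⧸ colSubgroup M) where
  Adj x y := x ≠ y ∧ ∃ i : ι,
    x - y = QuotientAddGroup.mk (Pi.single i 1) ∨
    x - y = -QuotientAddGroup.mk (Pi.single i 1)
  symm := ⟨by
    rintro x y ⟨hne, i, h | h⟩
    · exact ⟨hne.symm, i, Or.inr (by rw [← neg_sub, h])⟩
    · exact ⟨hne.symm, i, Or.inl (by rw [← neg_sub, h, neg_neg])⟩⟩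
  loopless := ⟨fun x h => h.1 rfl⟩

/-- The SACG of `M` has no loops: no standard basis vector lies in the
column subgroup. -/
def NoLoops {ι κ : Type*} [DecidableEq ι] (M : Matrix ι κ ℤ) : Prop :=
  ∀ i : ι, (Pi.single i 1 : ι → ℤ) ∉ colSubgroup M

/-! Write `v` for the column and `g i` for the image of `e i` in the quotient, so the only relation
is `∑ vᵢ • g i = 0`. A homomorphism from the quotient to `ℤ/N` sending every `g i` to `±1` is a
graph homomorphism onto the `N`-cycle. Sending every `g i` to `1 ∈ ℤ/2` works when `∑ vᵢ` is even;
sending `g i` to the sign of `vᵢ` in `ℤ/N` with `N = ∑ |vᵢ|` always works, and `N ≥ 2` as soon as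
`v ≠ 0, ±e i`; as cycles are 3-colourable, this gives the upper bounds. Conversely, a
2-colouring changes colour along every `g i`, so it differs by a constant from the parity map
`y ↦ ∑ yᵢ mod 2`; evaluating at the relation `v` shows that `∑ vᵢ` is even. -/

open SimpleGraph QuotientAddGroup

section Periodic

variable {ι : Type*} [Fintype ι] [DecidableEq ι]

lemma AddSubgroup.eq_top_of_forall_single_mem (S : AddSubgroup (ι → ℤ))
    (h : ∀ i, Pi.single i 1 ∈ S) : S = ⊤ := by
  have hspan : Submodule.span ℤ (Set.range (Pi.basisFun ℤ ι)) ≤ S.toIntSubmodule :=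
    Submodule.span_le.2 <| by rintro _ ⟨i, rfl⟩; simpa using h i
  rw [Module.Basis.span_eq, top_le_iff] at hspan
  exact AddSubgroup.toIntSubmodule.injective (hspan.trans (map_top _).symm)

lemma apply_eq_apply_zero_of_forall_add_single {β : Type*} (f : (ι → ℤ) → β)
    (hf : ∀ y i, f (y + Pi.single i 1) = f y) (z : ι → ℤ) : f z = f 0 := by
  let periods : AddSubgroup (ι → ℤ) :=
    { carrier := {z | ∀ y, f (y + z) = f y}
      zero_mem' := fun y => by rw [add_zero]
      add_mem' := fun ha hb y => by rw [← add_assoc, hb, ha]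
      neg_mem' := fun {a} ha y => by rw [← ha (y + -a), neg_add_cancel_right] }
  have hz : z ∈ periods := by
    rw [AddSubgroup.eq_top_of_forall_single_mem periods fun i y => hf y i]
    trivial
  simpa using hz 0

end Periodic

namespace SACG

lemma mk_col_eq_zero {ι κ : Type*} (M : Matrix ι κ ℤ) (j : κ) :
    (mk (fun i => M i j) : (ι → ℤ) ⧸ colSubgroup M) = 0 :=
  (eq_zero_iff _).2 (AddSubgroup.subset_closure ⟨j, rfl⟩)

variable {ι κ : Type*} [DecidableEq ι] {M : Matrix ι κ ℤ}

lemma adj_add_single (hM : NoLoops M) (x : (ι → ℤ) ⧸ colSubgroup M) (i : ι) :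
    (SACG M).Adj (x + mk (Pi.single i 1)) x :=
  ⟨fun h => hM i ((eq_zero_iff _).1 (add_eq_left.1 h)), i, Or.inl (add_sub_cancel_left x _)⟩

/-- The homomorphism `e i + H ↦ w i`. -/
def weightHom [Fintype ι] {A : Type*} [AddCommGroup A] (M : Matrix ι κ ℤ) (w : ι → A)
    (hw : ∀ j, ∑ i, M i j • w i = 0) : (ι → ℤ) ⧸ colSubgroup M →+ A :=
  lift _ (Fintype.linearCombination ℤ w).toAddMonoidHom <|
    show colSubgroup M ≤ _ from (AddSubgroup.closure_le _).2 <| by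
      rintro _ ⟨j, rfl⟩
      simpa [Fintype.linearCombination_apply] using hw j

lemma weightHom_mk_single [Fintype ι] {A : Type*} [AddCommGroup A] (w : ι → A)
    (hw : ∀ j, ∑ i, M i j • w i = 0) (i : ι) : weightHom M w hw (mk (Pi.single i 1)) = w i := by
  rw [weightHom, lift_mk]
  simp [Fintype.linearCombination_apply_single]

def homCycleGraph [Fintype ι] {n : ℕ} (M : Matrix ι κ ℤ) (w : ι → Fin (n + 2))
    (hw_unit : ∀ i, w i = 1 ∨ w i = -1) (hw : ∀ j, ∑ i, M i j • w i = 0) :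
    SACG M →g cycleGraph (n + 2) where
  toFun := weightHom M w hw
  map_rel' := by
    rintro x y ⟨-, i, hxy⟩
    rw [cycleGraph_adj, ← neg_sub (weightHom M w hw x), neg_eq_iff_eq_neg, ← map_sub]
    have hstep : weightHom M w hw (x - y) = w i ∨ weightHom M w hw (x - y) = -w i := by
      rcases hxy with h | h <;> simp [h, weightHom_mk_single]
    rcases hw_unit i with hi | hi <;> rw [hi] at hstep
    · exact hstep
    · rwa [neg_neg, or_comm] at hstep

theorem even_sum_of_colorable_two [Fintype ι] (hM : NoLoops M) (h : (SACG M).Colorable 2)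
    (j : κ) : Even (∑ i, M i j) := by
  obtain ⟨c⟩ := h
  let color : (ι → ℤ) ⧸ colSubgroup M → ZMod 2 := c
  let parity := Fintype.linearCombination ℤ fun _ : ι => (1 : ZMod 2)
  have hflip (x : (ι → ℤ) ⧸ colSubgroup M) (i : ι) : color (x + mk (Pi.single i 1)) = color x + 1 :=
    (by decide : ∀ a b : ZMod 2, a ≠ b → a = b + 1) _ _ (c.valid (adj_add_single hM x i))
  have hconst := apply_eq_apply_zero_of_forall_add_single (fun y => color (mk y) - parity y)
    (fun y i => by simp [hflip, parity, Fintype.linearCombination_apply_single]) (fun i => M i j)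
  simp only [mk_col_eq_zero, QuotientAddGroup.mk_zero, map_zero, sub_zero, sub_eq_self, parity,
    Fintype.linearCombination_apply, zsmul_one] at hconst
  exact ZMod.intCast_eq_zero_iff_even.1 (by push_cast; exact hconst)

end SACG

section SingleColumn

lemma colSubgroup_eq_zmultiples {ι : Type*} (M : Matrix ι (Fin 1) ℤ) :
    colSubgroup M = AddSubgroup.zmultiples fun i => M i 0 := by
  rw [colSubgroup, Set.range_unique, AddSubgroup.zmultiples_eq_closure]
  rfl

variable {ι : Type*} [DecidableEq ι]

lemma noLoops_of_forall_ne_single (M : Matrix ι (Fin 1) ℤ)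
    (hM : ∀ i : ι, (fun k => M k 0) ≠ (Pi.single i 1 : ι → ℤ) ∧
      (fun k => M k 0) ≠ -(Pi.single i 1 : ι → ℤ)) : NoLoops M := by
  intro i hi
  obtain ⟨k, hk⟩ := AddSubgroup.mem_zmultiples_iff.1 (colSubgroup_eq_zmultiples M ▸ hi)
  have hki : k * M i 0 = 1 := by simpa using congrFun hk i
  rcases Int.eq_one_or_neg_one_of_mul_eq_one' hki with ⟨rfl, -⟩ | ⟨rfl, -⟩
  · exact (hM i).1 (by simpa using hk)
  · exact (hM i).2 (by rw [← hk, neg_one_smul, neg_neg])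

lemma exists_eq_single_of_sum_natAbs_le_one [Fintype ι] {v : ι → ℤ} (hv0 : v ≠ 0)
    (hv : ∑ i, (v i).natAbs ≤ 1) : ∃ i, v = Pi.single i 1 ∨ v = -Pi.single i 1 := by
  obtain ⟨i, hi⟩ := Function.ne_iff.1 hv0
  have hpos := Int.natAbs_pos.2 hi
  have hvi : (v i).natAbs ≤ 1 :=
    (Finset.single_le_sum (fun k _ => Nat.zero_le (v k).natAbs) (Finset.mem_univ i)).trans hv
  have hrest (j : ι) (hj : j ≠ i) : v j = 0 := by
    have hpair := Finset.sum_le_sum_of_subset (f := fun k => (v k).natAbs)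
      (Finset.subset_univ {i, j})
    rw [Finset.sum_pair hj.symm] at hpair
    omega
  have hsingle : v = Pi.single i (v i) := by
    funext j
    by_cases hj : j = i
    · subst hj; simp
    · simp [hj, hrest j hj]
  refine ⟨i, ?_⟩
  rcases Int.natAbs_eq_iff.1 (show (v i).natAbs = 1 by omega) with h | h <;> rw [hsingle, h]
  · simp
  · simp [Pi.single_neg]

lemma exists_signed_cycle_weights [Fintype ι] {v : ι → ℤ} (hv0 : v ≠ 0)
    (hv : ∀ i, v ≠ Pi.single i 1 ∧ v ≠ -Pi.single i 1) :
    ∃ (n : ℕ) (w : ι → Fin (n + 2)), (∀ i, w i = 1 ∨ w i = -1) ∧ ∑ i, v i • w i = 0 := by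
  obtain ⟨n, hn⟩ : ∃ n, ∑ i, (v i).natAbs = n + 2 := by
    refine Nat.exists_eq_add_of_le' (not_lt.1 fun h => ?_)
    obtain ⟨i, hi | hi⟩ := exists_eq_single_of_sum_natAbs_le_one hv0 (Nat.lt_succ_iff.1 h)
    exacts [(hv i).1 hi, (hv i).2 hi]
  refine ⟨n, fun i => if 0 ≤ v i then 1 else -1, fun i => by
    by_cases h : 0 ≤ v i <;> simp [h], ?_⟩
  have habs (i : ι) : v i • (if 0 ≤ v i then 1 else -1 : Fin (n + 2)) = (v i).natAbs • 1 := by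
    rw [← natCast_zsmul, Int.natCast_natAbs]
    split_ifs with h
    · rw [abs_of_nonneg h]
    · rw [abs_of_neg (not_le.1 h), smul_neg, neg_smul]
  simp only [habs]
  rw [← Finset.sum_smul, hn]
  simpa using card_nsmul_eq_zero' (G := Fin (n + 2)) (x := 1)

end SingleColumn

theorem tomato_cage_theorem (m : ℕ) (hm : 0 < m) (M : Matrix (Fin m) (Fin 1) ℤ)
    (hM : ∀ i : Fin m, (fun k => M k 0) ≠ (Pi.single i 1 : Fin m → ℤ) ∧
      (fun k => M k 0) ≠ -(Pi.single i 1 : Fin m → ℤ)) :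
    (Even (∑ i, M i 0) → (SACG M).chromaticNumber = 2) ∧
    (¬ Even (∑ i, M i 0) → (SACG M).chromaticNumber = 3) := by
  have hloops := noLoops_of_forall_ne_single M hM
  have hnot_one : ¬ (SACG M).Colorable 1 := by
    rw [colorable_one_iff, ← Ne, ne_bot_iff_exists_adj]
    exact ⟨_, _, SACG.adj_add_single hloops 0 ⟨0, hm⟩⟩
  refine ⟨fun heven => ?_, fun hodd => ?_⟩
  · have hw : ∀ j : Fin 1, ∑ i, M i j • (1 : Fin 2) = 0 := Fin.forall_fin_one.2 <| by
      obtain ⟨k, hk⟩ := heven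
      rw [← Finset.sum_smul, hk, add_smul, ← smul_add]
      exact smul_zero k
    refine (chromaticNumber_eq_iff_colorable_not_colorable (n := 1)).2 ⟨?_, hnot_one⟩
    exact .of_hom (SACG.homCycleGraph (n := 0) M 1 (fun _ => .inl rfl) hw)
      (cycleGraph.bicoloring_of_even 2 even_two).colorable
  · have hv0 : (fun k => M k 0) ≠ 0 := fun h => hodd ⟨0, by simp [congrFun h]⟩
    obtain ⟨n, w, hw_unit, hw⟩ := exists_signed_cycle_weights hv0 hM
    refine (chromaticNumber_eq_iff_colorable_not_colorable (n := 2)).2 ⟨?_, ?_⟩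
    · exact .of_hom (SACG.homCycleGraph M w hw_unit (Fin.forall_fin_one.2 hw))
        (cycleGraph.tricoloring _ (by omega)).colorable
    · exact fun h2 => hodd (SACG.even_sum_of_colorable_two hloops h2 0)
end

section
/- Let M be an m×r integer matrix, let P be an m×m signed permutation matrix, and let U be an r×r integer matrix with determinant 1 or −1. Then the standardized abelian Cayley graph of P·M·U is isomorphic (as a simple graph) to the standardized abelian Cayley graph of M. -/
/-- A signed permutation matrix: each row and each column has exactly one
nonzero entry, and every entry is `0`, `1`, or `-1`. -/
def IsSignedPermMatrix {n : ℕ} (P : Matrix (Fin n) (Fin n) ℤ) : Prop :=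
  (∀ i, ∃! j, P i j ≠ 0) ∧ (∀ j, ∃! i, P i j ≠ 0) ∧
  ∀ i j, P i j = 0 ∨ P i j = 1 ∨ P i j = -1

/-!
Left multiplication by `P` is an automorphism of `ℤ^m` that carries the column lattice of `M`
onto that of `P * M` and permutes the generators `±eᵢ`, so it descends to a graph isomorphism of
the quotients; right multiplication by the unimodular `U` does not change the column lattice at all.
-/

open Matrix

def signedBasis (ι : Type*) [DecidableEq ι] : Set (ι → ℤ) :=
  {v | ∃ i, v = Pi.single i 1 ∨ v = -Pi.single i 1}

section colSubgroup

variable {ι κ : Type*} [Fintype κ]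

theorem colSubgroup_eq_range_mulVecLin (A : Matrix ι κ ℤ) :
    colSubgroup A = (LinearMap.range A.mulVecLin).toAddSubgroup := by
  rw [range_mulVecLin, Submodule.span_int_eq_addSubgroupClosure]
  rfl

theorem colSubgroup_mul_of_isUnit_det [DecidableEq κ] (A : Matrix ι κ ℤ) {U : Matrix κ κ ℤ}
    (hU : IsUnit U.det) : colSubgroup (A * U) = colSubgroup A := by
  have hsurj : LinearMap.range U.mulVecLin = ⊤ := LinearMap.range_eq_top.2 <|
    mulVec_surjective_iff_isUnit.2 <| (isUnit_iff_isUnit_det U).2 hU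
  rw [colSubgroup_eq_range_mulVecLin, colSubgroup_eq_range_mulVecLin, mulVecLin_mul,
    LinearMap.range_comp_of_range_eq_top _ hsurj]

theorem colSubgroup_mul_left [Fintype ι] (P : Matrix ι ι ℤ) (A : Matrix ι κ ℤ) :
    colSubgroup (P * A) = (colSubgroup A).map (P.mulVecLin : (ι → ℤ) →+ (ι → ℤ)) := by
  rw [colSubgroup_eq_range_mulVecLin, colSubgroup_eq_range_mulVecLin, mulVecLin_mul,
    LinearMap.range_comp, Submodule.map_toAddSubgroup]

end colSubgroup

namespace SACG

variable {ι κ κ' : Type*} [DecidableEq ι] {A : Matrix ι κ ℤ} {B : Matrix ι κ' ℤ}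

theorem adj_iff {x y : (ι → ℤ) ⧸ colSubgroup A} :
    (SACG A).Adj x y ↔ x ≠ y ∧ x - y ∈ QuotientAddGroup.mk '' signedBasis ι := by
  simp only [SACG, signedBasis, Set.mem_image, Set.mem_ofPred_eq]
  constructor
  · rintro ⟨hne, i, h | h⟩
    · exact ⟨hne, _, ⟨i, Or.inl rfl⟩, h.symm⟩
    · exact ⟨hne, _, ⟨i, Or.inr rfl⟩, h.symm⟩
  · rintro ⟨hne, _, ⟨i, rfl | rfl⟩, h⟩
    · exact ⟨hne, i, Or.inl h.symm⟩
    · exact ⟨hne, i, Or.inr h.symm⟩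

def isoOfAddEquiv (ψ : (ι → ℤ) ⧸ colSubgroup A ≃+ (ι → ℤ) ⧸ colSubgroup B)
    (hψ : ψ '' (QuotientAddGroup.mk '' signedBasis ι) = QuotientAddGroup.mk '' signedBasis ι) :
    SACG A ≃g SACG B where
  toEquiv := ψ.toEquiv
  map_rel_iff' {x y} := by
    simp only [adj_iff, AddEquiv.toEquiv_eq_coe, EquivLike.coe_coe, ← map_sub, ← hψ,
      ψ.injective.ne_iff, ψ.injective.mem_set_image]

def isoOfMapColSubgroup (f : (ι → ℤ) ≃+ (ι → ℤ))
    (hf : (colSubgroup A).map (f : (ι → ℤ) →+ (ι → ℤ)) = colSubgroup B)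
    (hT : f '' signedBasis ι = signedBasis ι) : SACG A ≃g SACG B :=
  isoOfAddEquiv (QuotientAddGroup.congr _ _ f hf) <| by
    conv_rhs => rw [← hT, Set.image_image]
    exact Set.image_image _ _ _

end SACG

namespace IsSignedPermMatrix

variable {n : ℕ} {P : Matrix (Fin n) (Fin n) ℤ} (hP : IsSignedPermMatrix P)
include hP

theorem transpose : IsSignedPermMatrix Pᵀ :=
  ⟨hP.2.1, hP.1, fun i j => hP.2.2 j i⟩

theorem eq_zero_of_ne_zero_of_ne {i j k : Fin n} (hj : P i j ≠ 0) (hk : k ≠ j) : P i k = 0 := by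
  obtain ⟨_, _, huniq⟩ := hP.1 i
  by_contra h
  exact hk ((huniq k h).trans (huniq j hj).symm)

theorem mul_self_eq_one {i j : Fin n} (h : P i j ≠ 0) : P i j * P i j = 1 := by
  rcases hP.2.2 i j with h' | h' | h' <;> simp_all

theorem transpose_mul_self : Pᵀ * P = 1 := by
  ext j k
  obtain ⟨i, hi, -⟩ := hP.2.1 j
  rw [mul_apply, Finset.sum_eq_single i]
  · by_cases hjk : j = k
    · subst hjk
      simp [hP.mul_self_eq_one hi]
    · simp [one_apply_ne hjk, hP.eq_zero_of_ne_zero_of_ne hi (Ne.symm hjk)]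
  · intro i' _ hi'
    have h0 : P i' j = 0 := hP.transpose.eq_zero_of_ne_zero_of_ne hi hi'
    simp [h0]
  · simp

theorem mul_transpose_self : P * Pᵀ = 1 := by
  simpa using hP.transpose.transpose_mul_self

theorem mulVec_single_mem_signedBasis (j : Fin n) :
    P *ᵥ Pi.single j 1 ∈ signedBasis (Fin n) := by
  obtain ⟨i, hi, -⟩ := hP.2.1 j
  have hcol : P *ᵥ Pi.single j 1 = P i j • Pi.single i 1 := by
    ext k
    rw [mulVec_single_one]
    by_cases hki : k = i
    · subst hki; simp
    · have h0 : P k j = 0 := hP.transpose.eq_zero_of_ne_zero_of_ne hi hki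
      simp [Pi.single_eq_of_ne hki, h0]
  rcases hP.2.2 i j with h | h | h
  · exact absurd h hi
  · exact ⟨i, Or.inl (by simp [hcol, h])⟩
  · exact ⟨i, Or.inr (by simp [hcol, h])⟩

theorem mapsTo_mulVec_signedBasis :
    Set.MapsTo P.mulVec (signedBasis (Fin n)) (signedBasis (Fin n)) := by
  rintro _ ⟨j, rfl | rfl⟩
  · exact hP.mulVec_single_mem_signedBasis j
  · obtain ⟨i, h | h⟩ := hP.mulVec_single_mem_signedBasis j
    · exact ⟨i, Or.inr (by rw [mulVec_neg, h])⟩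
    · exact ⟨i, Or.inl (by rw [mulVec_neg, h, neg_neg])⟩

theorem image_mulVec_signedBasis : P.mulVec '' signedBasis (Fin n) = signedBasis (Fin n) :=
  hP.mapsTo_mulVec_signedBasis.image_subset.antisymm fun v hv =>
    ⟨Pᵀ *ᵥ v, hP.transpose.mapsTo_mulVec_signedBasis hv, by
      rw [mulVec_mulVec, hP.mul_transpose_self, one_mulVec]⟩

def mulVecEquiv : (Fin n → ℤ) ≃ₗ[ℤ] (Fin n → ℤ) :=
  .ofLinearMap P.mulVecLin Pᵀ.mulVecLin
    (by rw [← mulVecLin_mul, hP.mul_transpose_self, mulVecLin_one])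
    (by rw [← mulVecLin_mul, hP.transpose_mul_self, mulVecLin_one])

end IsSignedPermMatrix

theorem SACG_iso_of_signed_perm_mul_unimodular (m r : ℕ)
    (M : Matrix (Fin m) (Fin r) ℤ)
    (P : Matrix (Fin m) (Fin m) ℤ) (hP : IsSignedPermMatrix P)
    (U : Matrix (Fin r) (Fin r) ℤ) (hU : U.det = 1 ∨ U.det = -1) :
    Nonempty (SACG (P * M * U) ≃g SACG M) := by
  have hf : (colSubgroup M).map (hP.mulVecEquiv.toAddEquiv : (Fin m → ℤ) →+ (Fin m → ℤ)) =
      colSubgroup (P * M * U) := by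
    rw [colSubgroup_mul_of_isUnit_det _ (Int.isUnit_iff.2 hU), colSubgroup_mul_left]
    rfl
  exact ⟨(SACG.isoOfMapColSubgroup _ hf hP.image_mulVec_signedBasis).symm⟩
end

section
/- Let M be an m×r integer matrix with m ≥ 2, and let M' be the (m−1)×r integer matrix obtained from M by replacing two distinct rows of M with their sum (i.e., collapsing those two rows by adding them) and keeping all other rows. Suppose the standardized abelian Cayley graph of M' has no loops. Then there exists a graph homomorphism from the standardized abelian Cayley graph of M to the standardized abelian Cayley graph of M'. -/
/-!
Collapsing rows `a` and `b` is the additive map `(ι → ℤ) → ({i // i ≠ b} → ℤ)` that adds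
coordinate `b` to coordinate `a`. It sends the columns of `M` to those of `M'`, so it descends to
the quotient groups, and it sends every basis vector to a basis vector, so differences `±eᵢ`
become differences `±eᵢ'`; these are nonzero in the quotient exactly because `M'` has no loops.
-/

section
variable {ι ι' κ κ' : Type*}

lemma colSubgroup_le_comap {M : Matrix ι κ ℤ} {M' : Matrix ι' κ' ℤ} (f : (ι → ℤ) →+ (ι' → ℤ))
    (hf : ∀ j, f (fun i => M i j) ∈ colSubgroup M') :
    colSubgroup M ≤ (colSubgroup M').comap f := by
  rw [colSubgroup, AddSubgroup.closure_le]
  rintro _ ⟨j, rfl⟩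
  exact hf j

variable [DecidableEq ι] [DecidableEq ι']

lemma NoLoops.mk_single_ne_zero {M : Matrix ι κ ℤ} (h : NoLoops M) (i : ι) :
    (QuotientAddGroup.mk (Pi.single i 1) : (ι → ℤ) ⧸ colSubgroup M) ≠ 0 :=
  fun h0 => h i ((QuotientAddGroup.eq_zero_iff _).mp h0)

lemma SACG.adj_of_sub_eq {M : Matrix ι κ ℤ} (h : NoLoops M) {x y : (ι → ℤ) ⧸ colSubgroup M}
    (i : ι) (hxy : x - y = QuotientAddGroup.mk (Pi.single i 1) ∨
      x - y = -QuotientAddGroup.mk (Pi.single i 1)) :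
    (SACG M).Adj x y := by
  refine ⟨fun hx => h.mk_single_ne_zero i ?_, i, hxy⟩
  rcases hxy with hxy | hxy
  · rw [← hxy, hx, sub_self]
  · rw [← neg_eq_zero, ← hxy, hx, sub_self]

def SACG.homOfAddMonoidHom {M : Matrix ι κ ℤ} {M' : Matrix ι' κ' ℤ} (f : (ι → ℤ) →+ (ι' → ℤ))
    (hle : colSubgroup M ≤ (colSubgroup M').comap f) (σ : ι → ι')
    (hσ : ∀ i, f (Pi.single i 1) = Pi.single (σ i) 1) (hloops : NoLoops M') :
    SACG M →g SACG M' where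
  toFun := QuotientAddGroup.map _ _ f hle
  map_rel' := by
    rintro x y ⟨-, i, hxy⟩
    have hsingle : QuotientAddGroup.map _ _ f hle (QuotientAddGroup.mk (Pi.single i 1)) =
        QuotientAddGroup.mk (Pi.single (σ i) 1) := by
      rw [QuotientAddGroup.map_mk, hσ]
    refine SACG.adj_of_sub_eq hloops (σ i) ?_
    rw [← map_sub, ← hsingle, ← map_neg]
    rcases hxy with hxy | hxy <;> simp only [hxy, true_or, or_true]

end

section
variable {ι : Type*} [DecidableEq ι]

def collapseRows (a b : ι) : (ι → ℤ) →+ ({i // i ≠ b} → ℤ) where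
  toFun x i := if (i : ι) = a then x a + x b else x i
  map_zero' := by
    funext i
    simp
  map_add' x y := by
    funext i
    by_cases h : (i : ι) = a <;> simp [h, add_add_add_comm]

def collapseIndex {a b : ι} (hab : a ≠ b) (i : ι) : {i // i ≠ b} :=
  if h : i = b then ⟨a, hab⟩ else ⟨i, h⟩

lemma collapseRows_single {a b : ι} (hab : a ≠ b) (i : ι) :
    collapseRows a b (Pi.single i 1) = Pi.single (collapseIndex hab i) 1 := by
  funext j
  by_cases hib : i = b
  · subst hib
    by_cases hja : (j : ι) = a <;>
      simp [collapseRows, collapseIndex, Pi.single_apply, Subtype.ext_iff, hja, j.2, hab]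
  · by_cases hja : (j : ι) = a <;>
      simp [collapseRows, collapseIndex, Pi.single_apply, Subtype.ext_iff, hja, hib]

end

theorem SACG_hom_of_collapse_rows (m r : ℕ) (M : Matrix (Fin (m + 2)) (Fin r) ℤ)
    (a b : Fin (m + 2)) (hab : a ≠ b)
    (M' : Matrix {i : Fin (m + 2) // i ≠ b} (Fin r) ℤ)
    (hM' : ∀ (i : {i : Fin (m + 2) // i ≠ b}) (j : Fin r),
      M' i j = if (i : Fin (m + 2)) = a then M a j + M b j else M (i : Fin (m + 2)) j)
    (hloops : NoLoops M') :
    Nonempty (SACG M →g SACG M') := by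
  have hcols : ∀ j, collapseRows a b (fun i => M i j) = fun i => M' i j :=
    fun j => funext fun i => (hM' i j).symm
  have hle : colSubgroup M ≤ (colSubgroup M').comap (collapseRows a b) :=
    colSubgroup_le_comap _ fun j => hcols j ▸ AddSubgroup.subset_closure ⟨j, rfl⟩
  exact ⟨SACG.homOfAddMonoidHom _ hle (collapseIndex hab) (collapseRows_single hab) hloops⟩
end

section
/- Let M be an m×r integer matrix whose standardized abelian Cayley graph X has no loops. Then X is 2-colorable if and only if every column sum of M is even (i.e., for each column of M, the sum of its entries is even). -/
/-!
A proper 2-colouring `c` of the Cayley graph, read as a function to `ZMod 2`, must flip at every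
generator: `c (eᵢ + x) = c x + 1`. Since the `eᵢ` generate `ℤᵐ`, this forces `c (w + x) = c x + p w`,
where `p w` is the coordinate sum of `w` mod 2; applied to `w ∈ H` (so `w + x ≡ x`) it gives
`p w = 0`. Conversely, if `p` kills `H`, it descends to the quotient and is itself a proper
colouring, as `p (±eᵢ) = 1`. Both sides thus say that `H ≤ ker p`, i.e. that the column sums
are even.
-/

open QuotientAddGroup

theorem AddSubgroup.apply_add_eq_of_closure_eq_top {G A : Type*} [AddGroup G] [AddCommGroup A]
    {T : Set G} (hT : AddSubgroup.closure T = ⊤) (χ : G →+ A) {c : G → A}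
    (hc : ∀ s ∈ T, ∀ x, c (s + x) = c x + χ s) (g x : G) : c (g + x) = c x + χ g := by
  have hg : g ∈ AddSubgroup.closure T := hT ▸ AddSubgroup.mem_top g
  induction hg using AddSubgroup.closure_induction generalizing x with
  | mem s hs => exact hc s hs x
  | zero => simp
  | add a b _ _ ha hb => rw [add_assoc, ha, hb, map_add, add_comm (χ a), add_assoc]
  | neg a _ ha =>
    have h := ha (-a + x)
    rw [add_neg_cancel_left] at h
    rw [map_neg, h, add_neg_cancel_right]

theorem Pi.closure_range_single_one (ι : Type*) [Finite ι] [DecidableEq ι] :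
    AddSubgroup.closure (Set.range fun i : ι => (Pi.single i 1 : ι → ℤ)) = ⊤ := by
  rw [← Submodule.span_int_eq_addSubgroupClosure, Submodule.toAddSubgroup_eq_top,
    ← (Pi.basisFun ℤ ι).span_eq, ← funext (Pi.basisFun_apply ℤ ι)]

def parity (ι : Type*) [Fintype ι] : (ι → ℤ) →+ ZMod 2 :=
  ∑ i, (Int.castAddHom (ZMod 2)).comp (Pi.evalAddMonoidHom (fun _ => ℤ) i)

section Parity

variable {ι : Type*} [Fintype ι]

theorem parity_apply (v : ι → ℤ) : parity ι v = ((∑ i, v i : ℤ) : ZMod 2) := by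
  simp [parity]

theorem parity_eq_zero_iff_even (v : ι → ℤ) : parity ι v = 0 ↔ Even (∑ i, v i) := by
  rw [parity_apply, ZMod.intCast_eq_zero_iff_even]

theorem parity_single_one [DecidableEq ι] (i : ι) : parity ι (Pi.single i 1) = 1 := by
  simp [parity_apply, Finset.sum_pi_single']

end Parity

theorem colSubgroup_le_iff {ι κ : Type*} {M : Matrix ι κ ℤ} {K : AddSubgroup (ι → ℤ)} :
    colSubgroup M ≤ K ↔ ∀ j, (fun i => M i j) ∈ K := by
  rw [colSubgroup, AddSubgroup.closure_le, Set.range_subset_iff]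
  rfl

section SACG

variable {ι κ : Type*} [DecidableEq ι]

theorem SACG_adj_single_one_add {M : Matrix ι κ ℤ} (hloops : NoLoops M) (i : ι) (v : ι → ℤ) :
    (SACG M).Adj (mk (Pi.single i 1 + v)) (mk v) := by
  refine ⟨fun h => hloops i ?_, i, Or.inl (by simp)⟩
  rwa [← sub_eq_zero, ← mk_sub, add_sub_cancel_right,
    QuotientAddGroup.eq_zero_iff] at h

theorem colSubgroup_le_ker_parity_of_colorable [Fintype ι] {M : Matrix ι κ ℤ}
    (hloops : NoLoops M) (hcol : (SACG M).Colorable 2) : colSubgroup M ≤ (parity ι).ker := by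
  obtain ⟨C⟩ := hcol
  let c : (ι → ℤ) → ZMod 2 := fun v => C (mk v)
  have eq_add_one_of_ne : ∀ a b : ZMod 2, a ≠ b → a = b + 1 := by decide
  have hc : ∀ s ∈ Set.range fun i : ι => (Pi.single i 1 : ι → ℤ), ∀ x,
      c (s + x) = c x + parity ι s := by
    rintro _ ⟨i, rfl⟩ x
    rw [parity_single_one]
    exact eq_add_one_of_ne _ _ (C.valid (SACG_adj_single_one_add hloops i x))
  intro w hw
  have h := AddSubgroup.apply_add_eq_of_closure_eq_top (Pi.closure_range_single_one ι)
    (parity ι) hc w 0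
  have hw0 : c (w + 0) = c 0 := by
    rw [add_zero]
    exact congrArg C ((QuotientAddGroup.eq_zero_iff w).mpr hw)
  rw [hw0, left_eq_add] at h
  exact h

theorem colorable_of_colSubgroup_le_ker_parity [Fintype ι] {M : Matrix ι κ ℤ}
    (h : colSubgroup M ≤ (parity ι).ker) : (SACG M).Colorable 2 := by
  let p : (ι → ℤ) ⧸ colSubgroup M →+ ZMod 2 := lift _ (parity ι) h
  have hp : ∀ i, p (mk (Pi.single i 1)) = 1 := fun i => parity_single_one i
  refine ⟨SimpleGraph.Coloring.mk p fun {x y} ⟨_, i, hxy⟩ hpxy => ?_⟩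
  have hsub : p (x - y) = 0 := by rw [map_sub, hpxy, sub_self]
  rcases hxy with hxy | hxy <;> simp [hxy, hp] at hsub

end SACG

theorem SACG_bipartite_iff_column_sums_even (m r : ℕ) (M : Matrix (Fin m) (Fin r) ℤ)
    (hloops : NoLoops M) :
    (SACG M).Colorable 2 ↔ ∀ j, Even (∑ i, M i j) := by
  have hker : colSubgroup M ≤ (parity (Fin m)).ker ↔ ∀ j, Even (∑ i, M i j) := by
    simp only [colSubgroup_le_iff, AddMonoidHom.mem_ker, parity_eq_zero_iff_even]
  rw [← hker]
  exact ⟨colSubgroup_le_ker_parity_of_colorable hloops, colorable_of_colSubgroup_le_ker_parity⟩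
end

section
/- Let y₂₁, y₂₂, y₃₂ be integers and let M be the 3×2 integer matrix with rows (1,0), (y₂₁, y₂₂), (y₂₁, y₃₂). Suppose M has no zero rows and no zero columns, that y₂₂ ≡ y₃₂ (mod 3) with y₂₂ ≠ y₃₂, that the standardized abelian Cayley graph X of M has no loops, and that the chromatic number of X equals 4. Then |y₂₂| ∈ {1,2}, or |y₃₂| ∈ {1,2}, or |y₂₁| = 1. -/
/-!
Suppose the conclusion fails. Then `|y21| ≥ 2` (for `y21 = 0` the first column is `e₀`, a loop)
and `|y22| ≥ 3` or `|y32| ≥ 3`. In that situation there are `m > 0` and weights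
`r₁, r₂, r₃ ∈ [m, 2m]` with `r ᵥ* M ≡ 0 [ZMOD 3m]`, so `x ↦ r ⬝ᵥ x` descends to
`φ : ℤ³ ⧸ H →+ ZMod (3m)` sending every generator into the middle third of `ZMod (3m)`.
Colouring `x` by the third of `ZMod (3m)` containing `φ x` is then proper, since an edge shifts
`φ` by `±w` with `w ∈ [m, 2m]`, which cannot keep it inside one third; so `χ ≤ 3`.
Writing `(s, b, c)` for `(y21, y22, y32)`, up to symmetry `s ≥ 2`, `c ≥ 3`, `|b| ≤ c`, and the
weights are explicit:
`m = c` when `c ≥ 3s`, and `m = s (c - b)` otherwise.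
-/

open Matrix

lemma Int.exists_mul_mem_Icc {n a b : ℤ} (hn : 0 < n) (h : a + n - 1 ≤ b) :
    ∃ k, n * k ∈ Set.Icc a b := by
  have hdiv := Int.mul_ediv_add_emod (-a) n
  have hlo := Int.emod_nonneg (-a) hn.ne'
  have hhi := Int.emod_lt_of_pos (-a) hn
  exact ⟨-((-a) / n), by rw [mul_neg]; constructor <;> linarith⟩

lemma ZMod.val_div_ne_of_sub_eq_intCast {m : ℕ} (hm : 0 < m) {u v : ZMod (3 * m)} {w : ℤ}
    (hw : w ∈ Set.Icc (m : ℤ) (2 * m)) (h : u - v = w) : u.val / m ≠ v.val / m := by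
  have : NeZero (3 * m) := ⟨by omega⟩
  intro heq
  have hclose : (u.val : ℤ) - v.val < m ∧ (v.val : ℤ) - u.val < m := by
    have hu := Nat.div_add_mod u.val m
    have hv := Nat.div_add_mod v.val m
    have := Nat.mod_lt u.val hm
    have := Nat.mod_lt v.val hm
    rw [heq] at hu
    omega
  have hdvd : ((3 * m : ℕ) : ℤ) ∣ w - (u.val - v.val) := by
    rw [← ZMod.intCast_eq_intCast_iff_dvd_sub]
    push_cast
    rw [ZMod.natCast_zmod_val, ZMod.natCast_zmod_val, h]
  have hzero := Int.eq_zero_of_abs_lt_dvd hdvd (by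
    rw [abs_lt]; push_cast; constructor <;> linarith [hw.1, hw.2])
  linarith [hw.1]

namespace SACG

variable {ι κ : Type*} [DecidableEq ι]

theorem colorable_three_of_addMonoidHom (M : Matrix ι κ ℤ) {m : ℕ} (hm : 0 < m)
    (φ : (ι → ℤ) ⧸ colSubgroup M →+ ZMod (3 * m)) (a : ι → ℤ)
    (ha : ∀ i, a i ∈ Set.Icc (m : ℤ) (2 * m))
    (hφ : ∀ i, φ (QuotientAddGroup.mk (Pi.single i 1)) = a i) : (SACG M).Colorable 3 := by
  have : NeZero (3 * m) := ⟨by omega⟩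
  refine ⟨SimpleGraph.Coloring.mk (fun x => ⟨(φ x).val / m, ?_⟩) ?_⟩
  · rw [Nat.div_lt_iff_lt_mul hm]
    linarith [ZMod.val_lt (φ x)]
  · rintro x y ⟨-, i, h | h⟩ <;> simp only [ne_eq, Fin.mk.injEq]
    · exact ZMod.val_div_ne_of_sub_eq_intCast hm (ha i) (by rw [← map_sub, h, hφ])
    · refine (ZMod.val_div_ne_of_sub_eq_intCast hm (ha i) ?_).symm
      rw [← map_sub, ← neg_sub, h, neg_neg, hφ]

theorem colorable_three_of_weights [Fintype ι] (M : Matrix ι κ ℤ) {m : ℕ} (hm : 0 < m)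
    (a : ι → ℤ) (ha : ∀ i, a i ∈ Set.Icc (m : ℤ) (2 * m))
    (hM : ∀ j, (3 * m : ℤ) ∣ (a ᵥ* M) j) : (SACG M).Colorable 3 := by
  let f : (ι → ℤ) →+ ZMod (3 * m) :=
    AddMonoidHom.mk' (fun x => ((a ⬝ᵥ x : ℤ) : ZMod (3 * m))) (by simp [dotProduct_add])
  have hker : colSubgroup M ≤ f.ker := by
    rw [colSubgroup, AddSubgroup.closure_le]
    rintro _ ⟨j, rfl⟩
    change (((a ᵥ* M) j : ℤ) : ZMod (3 * m)) = 0
    rw [ZMod.intCast_zmod_eq_zero_iff_dvd]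
    exact_mod_cast hM j
  refine colorable_three_of_addMonoidHom M hm (QuotientAddGroup.lift _ f hker) a ha fun i => ?_
  simp [f, dotProduct_single]

end SACG

/-- Weights `r₁, r₂, r₃ ∈ [m, 2m]` with `![r₁, r₂, r₃] ᵥ* !![1, 0; s, b; s, c] ≡ 0 [ZMOD 3m]`. -/
def MiddleThirdWeights (s b c : ℤ) : Prop :=
  ∃ m r₁ r₂ r₃ : ℤ, 0 < m ∧ r₁ ∈ Set.Icc m (2 * m) ∧ r₂ ∈ Set.Icc m (2 * m) ∧
    r₃ ∈ Set.Icc m (2 * m) ∧ 3 * m ∣ r₁ + s * (r₂ + r₃) ∧ 3 * m ∣ b * r₂ + c * r₃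

namespace MiddleThirdWeights

variable {s b c : ℤ}

theorem neg_left (h : MiddleThirdWeights s b c) : MiddleThirdWeights (-s) b c := by
  obtain ⟨m, r₁, r₂, r₃, hm, h₁, h₂, h₃, hd₁, hd₂⟩ := h
  refine ⟨m, 3 * m - r₁, r₂, r₃, hm, ⟨by linarith [h₁.2], by linarith [h₁.1]⟩, h₂, h₃, ?_, hd₂⟩
  have : 3 * m - r₁ + -s * (r₂ + r₃) = 3 * m - (r₁ + s * (r₂ + r₃)) := by ring
  exact this ▸ dvd_sub dvd_rfl hd₁

theorem swap (h : MiddleThirdWeights s b c) : MiddleThirdWeights s c b := by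
  obtain ⟨m, r₁, r₂, r₃, hm, h₁, h₂, h₃, hd₁, hd₂⟩ := h
  exact ⟨m, r₁, r₃, r₂, hm, h₁, h₃, h₂, by rwa [add_comm r₃], by rwa [add_comm]⟩

theorem neg_right (h : MiddleThirdWeights s b c) : MiddleThirdWeights s (-b) (-c) := by
  obtain ⟨m, r₁, r₂, r₃, hm, h₁, h₂, h₃, hd₁, hd₂⟩ := h
  refine ⟨m, r₁, r₂, r₃, hm, h₁, h₂, h₃, hd₁, ?_⟩
  have : -b * r₂ + -c * r₃ = -(b * r₂ + c * r₃) := by ring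
  exact this ▸ hd₂.neg_right

theorem of_three_mul_le (hs : 2 ≤ s) (hc : 3 * s ≤ c) (hdvd : 3 ∣ c - b) :
    MiddleThirdWeights s b c := by
  obtain ⟨e, he⟩ := hdvd
  obtain ⟨j, hj₁, hj₂⟩ := Int.exists_mul_mem_Icc (a := c) (b := 2 * c) (n := 3 * s)
    (by linarith) (by linarith)
  have hj : 0 < j := by nlinarith
  have h3j : 3 * j ≤ c := by nlinarith
  refine ⟨c, 3 * s * j, c, 2 * c - 3 * j, by linarith, ⟨hj₁, hj₂⟩, ⟨le_rfl, by linarith⟩,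
    ⟨by linarith, by linarith⟩, ⟨s, by ring⟩, ⟨c - e - j, by linear_combination (-c) * he⟩⟩

theorem of_lt_of_mul_mem_Icc (hbc : b < c) (hdvd : 3 ∣ c - b) {k : ℤ}
    (hk : 3 * s * k ∈ Set.Icc (-b) (s * (c - b) - c)) : MiddleThirdWeights s b c := by
  obtain ⟨e, he⟩ := hdvd
  obtain ⟨hk₁, hk₂⟩ := hk
  refine ⟨s * (c - b), 2 * (s * (c - b)), s * (c - b) + c + 3 * s * k,
    2 * (s * (c - b)) - b - 3 * s * k, by nlinarith, ⟨by nlinarith, le_rfl⟩,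
    ⟨by linarith, by linarith⟩, ⟨by linarith, by linarith⟩, ⟨s + 1, by ring⟩,
    ⟨c - e - k, by linear_combination (-(s * (c - b))) * he⟩⟩

theorem of_abs_le (hs : 2 ≤ s) (hc : 3 ≤ c) (hbc : |b| ≤ c) (hne : b ≠ c) (hdvd : 3 ∣ c - b) :
    MiddleThirdWeights s b c := by
  obtain ⟨hb₁, hb₂⟩ := abs_le.mp hbc
  rcases le_or_gt (3 * s) c with hsc | hsc
  · exact of_three_mul_le hs hsc hdvd
  have hd : 3 ≤ c - b := by omega
  rcases le_or_gt 0 b with hb | hb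
  · exact of_lt_of_mul_mem_Icc (k := 0) (by omega) hdvd ⟨by linarith, by nlinarith⟩
  · have hd : 6 ≤ c - b := by omega
    obtain ⟨k, hk⟩ := Int.exists_mul_mem_Icc (a := -b) (b := s * (c - b) - c)
      (n := 3 * s) (by linarith) (by nlinarith)
    exact of_lt_of_mul_mem_Icc (by omega) hdvd hk

theorem of_two_le_abs (hs : 2 ≤ |s|) (hbc : 3 ≤ |b| ∨ 3 ≤ |c|) (hne : b ≠ c)
    (hdvd : 3 ∣ c - b) : MiddleThirdWeights s b c := by
  wlog hs' : 0 ≤ s generalizing s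
  · simpa using (this (s := -s) (by rwa [abs_neg]) (by linarith)).neg_left
  wlog hle : |b| ≤ |c| generalizing b c
  · exact (this (hbc.symm) hne.symm (by simpa using hdvd.neg_right) (by linarith)).swap
  wlog hc : 0 ≤ c generalizing b c
  · simpa using (this (b := -b) (c := -c) (by simpa using hbc) (by simpa using hne)
      (by rw [← neg_sub', dvd_neg]; exact hdvd) (by simpa using hle) (by linarith)).neg_right
  rw [abs_of_nonneg hs'] at hs
  rw [abs_of_nonneg hc] at hle
  exact of_abs_le hs (hbc.elim (le_trans · hle) (abs_of_nonneg hc ▸ ·)) hle hne hdvd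

theorem colorable_SACG (h : MiddleThirdWeights s b c) :
    (SACG !![1, 0; s, b; s, c]).Colorable 3 := by
  obtain ⟨m, r₁, r₂, r₃, hm, h₁, h₂, h₃, hd₁, hd₂⟩ := h
  lift m to ℕ using hm.le
  refine SACG.colorable_three_of_weights _ (by omega) ![r₁, r₂, r₃]
    (Fin.forall_fin_succ.mpr ⟨h₁, Fin.forall_fin_succ.mpr ⟨h₂, Fin.forall_fin_one.mpr h₃⟩⟩) ?_
  intro j
  fin_cases j
  · simpa [vecMul, dotProduct, Fin.sum_univ_three, mul_add, mul_comm, add_assoc] using hd₁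
  · simpa [vecMul, dotProduct, Fin.sum_univ_three, mul_comm] using hd₂

end MiddleThirdWeights

theorem almost_mHNF_lemma_general (y21 y22 y32 : ℤ)
    (M : Matrix (Fin 3) (Fin 2) ℤ)
    (hMdef : M = !![1, 0; y21, y22; y21, y32])
    (hmod : y22 ≡ y32 [ZMOD 3]) (hne : y22 ≠ y32)
    (hloops : NoLoops M)
    (hchi : (SACG M).chromaticNumber = 4) :
    |y22| = 1 ∨ |y22| = 2 ∨ |y32| = 1 ∨ |y32| = 2 ∨ |y21| = 1 := by
  by_contra! h
  obtain ⟨h22₁, h22₂, h32₁, h32₂, h21⟩ := h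
  subst hMdef
  have hy21 : y21 ≠ 0 := by
    rintro rfl
    exact hloops 0 (AddSubgroup.subset_closure ⟨0, by ext i; fin_cases i <;> simp⟩)
  have hs : 2 ≤ |y21| := by have := abs_pos.mpr hy21; omega
  have hbc : 3 ≤ |y22| ∨ 3 ≤ |y32| := by
    by_contra! hsmall
    have h22 : |y22| = 0 := by have := abs_nonneg y22; omega
    have h32 : |y32| = 0 := by have := abs_nonneg y32; omega
    exact hne ((abs_eq_zero.mp h22).trans (abs_eq_zero.mp h32).symm)
  have hcol := (MiddleThirdWeights.of_two_le_abs hs hbc hne hmod.dvd).colorable_SACG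
  have := hchi ▸ hcol.chromaticNumber_le
  norm_num at this

theorem almost_mHNF_lemma (y21 y22 y32 : ℤ)
    (M : Matrix (Fin 3) (Fin 2) ℤ)
    (hMdef : M = !![1, 0; y21, y22; y21, y32])
    (hrows : ∀ i, ∃ j, M i j ≠ 0)
    (hcols : ∀ j, ∃ i, M i j ≠ 0)
    (hmod : y22 ≡ y32 [ZMOD 3]) (hne : y22 ≠ y32)
    (hloops : NoLoops M)
    (hchi : (SACG M).chromaticNumber = 4) :
    |y22| = 1 ∨ |y22| = 2 ∨ |y32| = 1 ∨ |y32| = 2 ∨ |y21| = 1 :=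
  almost_mHNF_lemma_general y21 y22 y32 M hMdef hmod hne hloops hchi
end

section
/- There exist seven unit vectors v₁,…,v₇ in ℝ² such that the simple graph on ℝ² in which distinct points x and y are adjacent iff x − y = v_i or x − y = −v_i for some i ∈ {1,…,7} has chromatic number at least 4. -/
/-- The graph on the plane generated by the vectors `v i`: distinct points
`x` and `y` are adjacent iff `x - y = ± v i` for some `i`. -/
def planeGraph {n : ℕ} (v : Fin n → EuclideanSpace ℝ (Fin 2)) :
    SimpleGraph (EuclideanSpace ℝ (Fin 2)) where
  Adj x y := x ≠ y ∧ ∃ i, x - y = v i ∨ x - y = -(v i)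
  symm := ⟨by
    rintro x y ⟨hne, i, h | h⟩
    · exact ⟨hne.symm, i, Or.inr (by rw [← neg_sub, h])⟩
    · exact ⟨hne.symm, i, Or.inl (by rw [← neg_sub, h, neg_neg])⟩⟩
  loopless := ⟨fun x h => h.1 rfl⟩

/-! The Moser spindle. Two unit rhombi, each made of two equilateral triangles, share a
vertex and are rotated against each other until their far tips are at unit distance. In a
3-colouring both tips of a rhombus get the colour of the shared vertex, so the two far tips,
being adjacent, would have the same colour. -/

open Set

namespace SimpleGraph

variable {V : Type*} (G : SimpleGraph V)

def IsDiamond (x y z w : V) : Prop :=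
  G.Adj x y ∧ G.Adj x z ∧ G.Adj y z ∧ G.Adj y w ∧ G.Adj z w

variable {G}

theorem Coloring.eq_of_isDiamond (C : G.Coloring (Fin 3)) {x y z w : V}
    (h : G.IsDiamond x y z w) : C x = C w := by
  obtain ⟨hxy, hxz, hyz, hyw, hzw⟩ := h
  have := C.valid hxy; have := C.valid hxz; have := C.valid hyz
  have := C.valid hyw; have := C.valid hzw
  omega

theorem four_le_chromaticNumber_of_isDiamond {x y z w y' z' w' : V}
    (h : G.IsDiamond x y z w) (h' : G.IsDiamond x y' z' w') (hw : G.Adj w w') :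
    4 ≤ G.chromaticNumber := by
  refine le_chromaticNumber_iff_colorable.2 fun m hm => ?_
  by_contra! hm4
  obtain ⟨C⟩ := hm.mono (show m ≤ 3 by exact_mod_cast Order.le_of_lt_add_one hm4)
  exact C.valid hw ((C.eq_of_isDiamond h).symm.trans (C.eq_of_isDiamond h'))

end SimpleGraph

section Spindle

variable {E F : Type*} [SeminormedAddCommGroup E] [SeminormedAddCommGroup F]

/-- The seven unit distances of a Moser spindle with vertices `0, a, b, a + b, c, d, c + d`. -/
def IsUnitSpindle (a b c d : E) : Prop :=
  ‖a‖ = 1 ∧ ‖b‖ = 1 ∧ ‖a - b‖ = 1 ∧ ‖c‖ = 1 ∧ ‖d‖ = 1 ∧ ‖c - d‖ = 1 ∧ ‖a + b - (c + d)‖ = 1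

theorem IsUnitSpindle.map {R : Type*} [Semiring R] [Module R E] [Module R F] (f : E →ₗᵢ[R] F)
    {a b c d : E} (h : IsUnitSpindle a b c d) : IsUnitSpindle (f a) (f b) (f c) (f d) := by
  simpa only [IsUnitSpindle, ← map_sub, ← map_add, LinearIsometry.norm_map] using h

end Spindle

open Complex in
theorem exists_isUnitSpindle_complex : ∃ a b c d : ℂ, IsUnitSpindle a b c d := by
  -- `ω = e^{iπ/3}` gives the rhombus `0, 1, ω, 1 + ω`; its rotation by `u` with
  -- `|1 - u| = 1/√3 = 1/|1 + ω|` moves the tip `1 + ω` by exactly one.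
  set ω : ℂ := ⟨1 / 2, √3 / 2⟩
  set u : ℂ := ⟨5 / 6, √11 / 6⟩
  have h3 : √3 ^ 2 = 3 := Real.sq_sqrt (by norm_num)
  have h11 : √11 ^ 2 = 11 := Real.sq_sqrt (by norm_num)
  obtain ⟨hω, h1ω, hu, htips⟩ : ‖ω‖ = 1 ∧ ‖1 - ω‖ = 1 ∧ ‖u‖ = 1 ∧ ‖(1 + ω) * (1 - u)‖ = 1 := by
    simp only [norm_def, Real.sqrt_eq_one, normSq_apply, mul_re, mul_im, add_re, add_im, sub_re,
      sub_im, one_re, one_im, ω, u]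
    refine ⟨?_, ?_, ?_, ?_⟩ <;> nlinarith
  refine ⟨1, ω, u, u * ω, norm_one, hω, h1ω, hu, by rw [norm_mul, hu, hω, one_mul], ?_, ?_⟩
  · rw [← mul_one_sub, norm_mul, hu, h1ω, one_mul]
  · rw [← htips]; ring_nf

theorem exists_isUnitSpindle_euclideanSpace :
    ∃ a b c d : EuclideanSpace ℝ (Fin 2), IsUnitSpindle a b c d := by
  obtain ⟨a, b, c, d, h⟩ := exists_isUnitSpindle_complex
  exact ⟨_, _, _, _, h.map Complex.orthonormalBasisOneI.repr.toLinearIsometry⟩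

section planeGraph

variable {n : ℕ} {v : Fin n → EuclideanSpace ℝ (Fin 2)}

theorem planeGraph_adj_of_sub_mem_range (hv : 0 ∉ range v) {x y : EuclideanSpace ℝ (Fin 2)}
    (h : x - y ∈ range v) : (planeGraph v).Adj x y := by
  obtain ⟨i, hi⟩ := h
  refine ⟨fun hxy => hv ⟨i, ?_⟩, i, Or.inl hi.symm⟩
  rw [hi, hxy, sub_self]

theorem planeGraph_isDiamond (hv : 0 ∉ range v) {a b : EuclideanSpace ℝ (Fin 2)}
    (ha : a ∈ range v) (hb : b ∈ range v) (hab : a - b ∈ range v) :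
    (planeGraph v).IsDiamond 0 a b (a + b) := by
  have adj {x y} (h : x - y ∈ range v) := planeGraph_adj_of_sub_mem_range hv h
  exact ⟨(adj (by rwa [sub_zero])).symm, (adj (by rwa [sub_zero])).symm, adj hab,
    (adj (by rwa [add_sub_cancel_left])).symm, (adj (by rwa [add_sub_cancel_right])).symm⟩

end planeGraph

theorem exists_seven_unit_vectors_chromatic_number_ge_four :
    ∃ v : Fin 7 → EuclideanSpace ℝ (Fin 2),
      (∀ i, ‖v i‖ = 1) ∧ 4 ≤ (planeGraph v).chromaticNumber := by
  obtain ⟨a, b, c, d, ha, hb, hab, hc, hd, hcd, htips⟩ := exists_isUnitSpindle_euclideanSpace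
  set v : Fin 7 → EuclideanSpace ℝ (Fin 2) := ![a, b, a - b, c, d, c - d, a + b - (c + d)]
  have hv : ∀ i, ‖v i‖ = 1 := by
    intro i; fin_cases i <;> assumption
  have hv0 : 0 ∉ range v := by
    rintro ⟨i, hi⟩
    simpa [hi] using hv i
  exact ⟨v, hv, SimpleGraph.four_le_chromaticNumber_of_isDiamond
    (planeGraph_isDiamond hv0 ⟨0, rfl⟩ ⟨1, rfl⟩ ⟨2, rfl⟩)
    (planeGraph_isDiamond hv0 ⟨3, rfl⟩ ⟨4, rfl⟩ ⟨5, rfl⟩)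
    (planeGraph_adj_of_sub_mem_range hv0 ⟨6, rfl⟩)⟩
end
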